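/- When the outcome model is correctly specified, the augmentation term of the doubly robust functional has mean zero: if g(x) := E[Y | X = x, R = true, A = a] for every x with ℙ(X = x, R = true, A = a) > 0, then for arbitrary functions p : 𝒳 → (0, 1) and e : 𝒳 → (0, 1], E[ ((1 − p(X(ω))) · 1{R = true, A = a}(ω) / (e(X(ω)) · p(X(ω)))) · (Y(ω) − g(X(ω))) ] = 0. -/

import Mathlib

/-!
On the fibre `X = x` the weight `(1 - p x) / (e x * p x)` is a constant, so the fibre's
contribution is that constant times `E[(Y - g x) · 1{X = x, R, A = a}]`, which vanishes because
`g x` is exactly the conditional mean of `Y` on that event (or the event is null).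
Summing over the fibres of `X` gives the claim.
-/

open Finset

attribute [local instance] Classical.propDecidable

variable {Ω : Type*}

/-- Probability of an event. -/
noncomputable def pr [Fintype Ω] (P : Ω → ℝ) (E : Ω → Prop) : ℝ :=
  ∑ ω, if E ω then P ω else 0

/-- Expectation of a real random variable. -/
noncomputable def ex [Fintype Ω] (P : Ω → ℝ) (Z : Ω → ℝ) : ℝ :=
  ∑ ω, P ω * Z ω

/-- Conditional probability ℙ(F | E) = ℙ(F ∩ E)/ℙ(E). -/
noncomputable def cpr [Fintype Ω] (P : Ω → ℝ) (F E : Ω → Prop) : ℝ :=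
  pr P (fun ω => F ω ∧ E ω) / pr P E

/-- Conditional expectation E[Z | E] = E[Z·1_E]/ℙ(E). -/
noncomputable def cex [Fintype Ω] (P : Ω → ℝ) (Z : Ω → ℝ) (E : Ω → Prop) : ℝ :=
  (∑ ω, if E ω then P ω * Z ω else 0) / pr P E

section Conditioning

variable [Fintype Ω] {P : Ω → ℝ}

lemma pr_nonneg (hP0 : ∀ ω, 0 ≤ P ω) (E : Ω → Prop) : 0 ≤ pr P E :=
  sum_nonneg fun ω _ => by split_ifs <;> simp [hP0 ω]

lemma eq_zero_of_pr_eq_zero (hP0 : ∀ ω, 0 ≤ P ω) {E : Ω → Prop} (hE : pr P E = 0)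
    {ω : Ω} (hω : E ω) : P ω = 0 := by
  have h := (sum_eq_zero_iff_of_nonneg fun ω _ => ?_).mp hE ω (mem_univ ω)
  · simpa [hω] using h
  · split_ifs <;> simp [hP0 ω]

-- When `pr P E = 0`, `cex P Z E` is the junk value `_ / 0 = 0`, but then `P` vanishes on `E`.
lemma sum_ite_mul_eq_cex_mul_pr (hP0 : ∀ ω, 0 ≤ P ω) (Z : Ω → ℝ) (E : Ω → Prop)
    [DecidablePred E] :
    (∑ ω, if E ω then P ω * Z ω else 0) = cex P Z E * pr P E := by
  rcases (pr_nonneg hP0 E).eq_or_lt with hE | hE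
  · rw [← hE, mul_zero]
    refine sum_eq_zero fun ω _ => ?_
    split_ifs with hω
    · rw [eq_zero_of_pr_eq_zero hP0 hE.symm hω, zero_mul]
    · rfl
  · rw [cex, div_mul_cancel₀ _ hE.ne']
    congr!

lemma sum_ite_mul_sub_eq_zero (hP0 : ∀ ω, 0 ≤ P ω) (Z : Ω → ℝ) (E : Ω → Prop)
    [DecidablePred E] {c : ℝ}
    (hc : 0 < pr P E → c = cex P Z E) :
    (∑ ω, if E ω then P ω * (Z ω - c) else 0) = 0 := by
  have hsplit : (∑ ω, if E ω then P ω * (Z ω - c) else 0)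
      = (∑ ω, if E ω then P ω * Z ω else 0) - c * pr P E := by
    rw [pr, mul_sum, ← sum_sub_distrib]
    exact sum_congr rfl fun ω _ => by split_ifs <;> ring
  rw [hsplit, sum_ite_mul_eq_cex_mul_pr hP0, ← sub_mul]
  rcases (pr_nonneg hP0 E).eq_or_lt with hE | hE
  · rw [← hE, mul_zero]
  · rw [hc hE, sub_self, zero_mul]

lemma ex_weighted_residual_eq_zero {𝒳 : Type*} (hP0 : ∀ ω, 0 ≤ P ω) (X : Ω → 𝒳)
    (Y : Ω → ℝ) (S : Ω → Prop) [DecidablePred S] (g w : 𝒳 → ℝ)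
    (hg : ∀ x, 0 < pr P (fun ω => X ω = x ∧ S ω) → g x = cex P Y (fun ω => X ω = x ∧ S ω)) :
    ex P (fun ω => w (X ω) * (if S ω then 1 else 0) * (Y ω - g (X ω))) = 0 := by
  rw [ex, ← sum_fiberwise_of_maps_to (t := univ.image X)
    fun ω _ => mem_image_of_mem X (mem_univ ω)]
  refine sum_eq_zero fun x _ => ?_
  have hfiber : (∑ ω with X ω = x, P ω * (w (X ω) * (if S ω then 1 else 0) * (Y ω - g (X ω))))
      = w x * ∑ ω, if X ω = x ∧ S ω then P ω * (Y ω - g x) else 0 := by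
    rw [sum_filter, mul_sum]
    refine sum_congr rfl fun ω _ => ?_
    by_cases hx : X ω = x
    · subst hx
      by_cases hS : S ω <;> simp [hS, mul_left_comm]
    · simp [hx]
  rw [hfiber, sum_ite_mul_sub_eq_zero hP0 Y _ (hg x), mul_zero]

end Conditioning

theorem augmentation_mean_zero_general
    {𝒳 𝒯 : Type*} [Fintype Ω]
    (P : Ω → ℝ) (hP0 : ∀ ω, 0 ≤ P ω)
    (X : Ω → 𝒳) (A : Ω → 𝒯) (Y : Ω → ℝ) (R : Ω → Bool) (a : 𝒯)
    -- correctly specified outcome model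
    (g : 𝒳 → ℝ)
    (hg : ∀ x, 0 < pr P (fun ω => X ω = x ∧ R ω = true ∧ A ω = a) →
      g x = cex P Y (fun ω => X ω = x ∧ R ω = true ∧ A ω = a))
    -- arbitrary participation and treatment models
    (p e : 𝒳 → ℝ) :
    ex P (fun ω =>
        ((1 - p (X ω)) * (if R ω = true ∧ A ω = a then (1 : ℝ) else 0)
            / (e (X ω) * p (X ω)))
          * (Y ω - g (X ω)))
      = 0 := by
  simp_rw [mul_div_right_comm]
  exact ex_weighted_residual_eq_zero hP0 X Y _ g (fun x => (1 - p x) / (e x * p x)) hg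

/-- When the outcome model is correctly specified, the augmentation term
of the doubly robust functional has mean zero, for arbitrary p and e. -/
theorem augmentation_mean_zero
    {𝒳 𝒯 : Type*} [Fintype Ω] [Fintype 𝒳] [Fintype 𝒯]
    (P : Ω → ℝ) (hP0 : ∀ ω, 0 ≤ P ω) (hP1 : ∑ ω, P ω = 1)
    (X : Ω → 𝒳) (A : Ω → 𝒯) (Y : Ω → ℝ) (R : Ω → Bool) (a : 𝒯)
    -- positivity, so that g is defined on the support of X
    (hpos : ∀ x, 0 < pr P (fun ω => X ω = x) →
      0 < pr P (fun ω => A ω = a ∧ X ω = x ∧ R ω = true))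
    -- correctly specified outcome model
    (g : 𝒳 → ℝ)
    (hg : ∀ x, 0 < pr P (fun ω => X ω = x ∧ R ω = true ∧ A ω = a) →
      g x = cex P Y (fun ω => X ω = x ∧ R ω = true ∧ A ω = a))
    -- arbitrary participation and treatment models
    (p e : 𝒳 → ℝ) (hp : ∀ x, 0 < p x ∧ p x < 1) (he : ∀ x, 0 < e x ∧ e x ≤ 1) :
    ex P (fun ω =>
        ((1 - p (X ω)) * (if R ω = true ∧ A ω = a then (1 : ℝ) else 0)
            / (e (X ω) * p (X ω)))
          * (Y ω - g (X ω)))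
      = 0 :=
  augmentation_mean_zero_general P hP0 X A Y R a g hg p e
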